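/- Let x = (xₙ) ∈ ℓ∞ and s ∈ ℝ. Then L(x) = s for every Banach limit L if and only if limₘ→∞ (1/m) Σⱼ₌₀^{m−1} x_{n+j} = s uniformly in n, i.e. for every ε > 0 there exists M such that for all m ≥ M and all n ≥ 1, |(1/m) Σⱼ₌₀^{m−1} x_{n+j} − s| < ε. -/

import Mathlib

noncomputable section
open scoped ENNReal

/-- `ℓ∞`: the Banach space of bounded real sequences with the sup norm. -/
abbrev Linf : Type := lp (fun _ : ℕ => ℝ) ∞

/-- The left shift `(x₁,x₂,x₃,…) ↦ (x₂,x₃,x₄,…)` on `ℓ∞`. -/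
def shiftSeq (x : Linf) : Linf :=
  ⟨fun n => x (n + 1), memℓp_infty ⟨‖x‖, by
    rintro r ⟨n, rfl⟩
    exact lp.norm_apply_le_norm ENNReal.top_ne_zero x (n + 1)⟩⟩

/-- The constant sequence `e = (1,1,1,…)` in `ℓ∞`. -/
def onesSeq : Linf :=
  ⟨fun _ => 1, memℓp_infty ⟨1, by rintro r ⟨n, rfl⟩; simp⟩⟩

/-- A Banach limit: a positive, shift-invariant continuous linear functional `L` on `ℓ∞`
with `L(1,1,1,…) = 1`. -/
def IsBanachLimit (L : StrongDual ℝ Linf) : Prop :=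
  (∀ x : Linf, (∀ n, 0 ≤ x n) → 0 ≤ L x) ∧
  (∀ x : Linf, L (shiftSeq x) = L x) ∧
  L onesSeq = 1

/-!
Let `p x = inf_m sup_n (1/m) ∑_{j<m} x (n + j)` (Lorentz; `upperCesaro` below). Every Banach
limit `L` satisfies `L ≤ p`, since `L x` is also the value of `L` on the `m`-averages of the
shifts of `x`. Conversely every linear functional below `p` is a Banach limit, so Hahn–Banach
gives a Banach limit with `L x = p x`. Hence `L x = s` for all Banach limits iff `p x ≤ s` and `p (-x) ≤ -s`.
Cutting a long window into blocks of a fixed length `b` shows that the `m`-averages are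
eventually uniformly below `p x + ε`, which makes the same two inequalities equivalent to
uniform convergence of the averages to `s`.
-/

open Finset Filter

theorem exists_linearMap_le_sublinear_eq {E : Type*} [AddCommGroup E] [Module ℝ E] (N : E → ℝ)
    (N_hom : ∀ c : ℝ, 0 < c → ∀ x, N (c • x) = c * N x) (N_add : ∀ x y, N (x + y) ≤ N x + N y)
    (x : E) : ∃ g : E →ₗ[ℝ] ℝ, (∀ y, g y ≤ N y) ∧ g x = N x := by
  have N_zero : N 0 = 0 := by
    have := N_hom 2 two_pos 0
    rw [smul_zero] at this
    linarith
  have N_neg : -N x ≤ N (-x) := by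
    have := N_add x (-x)
    rw [add_neg_cancel, N_zero] at this
    linarith
  let f := LinearPMap.mkSpanSingleton' (σ := RingHom.id ℝ) x (N x) fun c hc => by
    rcases smul_eq_zero.1 hc with rfl | rfl
    · simp
    · simp [N_zero]
  have hf : ∀ y : f.domain, f y ≤ N y := by
    rintro ⟨y, hy⟩
    obtain ⟨c, rfl⟩ := Submodule.mem_span_singleton.1 hy
    rw [LinearPMap.mkSpanSingleton'_apply, RingHom.id_apply, smul_eq_mul]
    change c * N x ≤ N (c • x)
    rcases lt_trichotomy c 0 with hc | rfl | hc
    · have := N_hom (-c) (neg_pos.2 hc) (-x)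
      rw [neg_smul_neg] at this
      nlinarith
    · simp [N_zero]
    · rw [N_hom c hc]
  obtain ⟨g, hgf, hgN⟩ := exists_extension_of_le_sublinear f N N_hom N_add hf
  exact ⟨g, hgN, (hgf ⟨x, Submodule.mem_span_singleton_self x⟩).trans
    (LinearPMap.mkSpanSingleton'_apply_self _ _ _ _)⟩

/-- For `m = 0` this is the junk value `0`, hence the `m + 1` in `upperCesaro`. -/
def cesaroAvg (x : ℕ → ℝ) (m n : ℕ) : ℝ := (∑ j ∈ range m, x (n + j)) / m

section CesaroAvg

variable (x y : ℕ → ℝ) (m n : ℕ)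

theorem cesaroAvg_one : cesaroAvg x 1 n = x n := by
  simp [cesaroAvg]

theorem cesaroAvg_add : cesaroAvg (x + y) m n = cesaroAvg x m n + cesaroAvg y m n := by
  simp only [cesaroAvg, Pi.add_apply, sum_add_distrib, add_div]

theorem cesaroAvg_neg : cesaroAvg (-x) m n = -cesaroAvg x m n := by
  simp only [cesaroAvg, Pi.neg_apply, sum_neg_distrib, neg_div]

theorem cesaroAvg_smul (c : ℝ) : cesaroAvg (c • x) m n = c * cesaroAvg x m n := by
  simp only [cesaroAvg, Pi.smul_apply, smul_eq_mul, ← mul_sum, mul_div_assoc]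

theorem abs_cesaroAvg_le {C : ℝ} (hC : 0 ≤ C) (hx : ∀ k, |x k| ≤ C) :
    |cesaroAvg x m n| ≤ C := by
  rcases m.eq_zero_or_pos with rfl | hm
  · simpa [cesaroAvg] using hC
  rw [cesaroAvg, abs_div, Nat.abs_cast, div_le_iff₀ (by positivity)]
  calc |∑ j ∈ range m, x (n + j)| ≤ ∑ j ∈ range m, |x (n + j)| := abs_sum_le_sum_abs _ _
    _ ≤ ∑ _j ∈ range m, C := sum_le_sum fun j _ => hx _
    _ = C * m := by rw [sum_const, card_range, nsmul_eq_mul, mul_comm]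

end CesaroAvg

theorem abs_apply_le_norm (x : Linf) (n : ℕ) : |x n| ≤ ‖x‖ :=
  lp.norm_apply_le_norm ENNReal.top_ne_zero x n

theorem shiftSeq_apply (x : Linf) (n : ℕ) : shiftSeq x n = x (n + 1) := rfl

theorem shiftSeq_neg (x : Linf) : shiftSeq (-x) = -shiftSeq x := rfl

theorem iterate_shiftSeq_apply (k : ℕ) (x : Linf) (n : ℕ) : (shiftSeq^[k] x) n = x (n + k) := by
  induction k generalizing x with
  | zero => rfl
  | succ k ih => rw [Function.iterate_succ_apply, ih]; rfl

theorem abs_cesaroAvg_le_norm (x : Linf) (m n : ℕ) : |cesaroAvg x m n| ≤ ‖x‖ :=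
  abs_cesaroAvg_le x m n (norm_nonneg x) (abs_apply_le_norm x)

def supCesaroAvg (x : Linf) (m : ℕ) : ℝ := ⨆ n, cesaroAvg x m n

def upperCesaro (x : Linf) : ℝ := ⨅ m : ℕ, supCesaroAvg x (m + 1)

section UpperCesaro

variable (x y : Linf)

theorem cesaroAvg_le_supCesaroAvg (m n : ℕ) : cesaroAvg x m n ≤ supCesaroAvg x m :=
  le_ciSup ⟨‖x‖, by rintro _ ⟨k, rfl⟩; exact (abs_le.1 (abs_cesaroAvg_le_norm x m k)).2⟩ n

theorem abs_supCesaroAvg_le_norm (m : ℕ) : |supCesaroAvg x m| ≤ ‖x‖ :=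
  abs_le.2 ⟨(abs_le.1 (abs_cesaroAvg_le_norm x m 0)).1.trans (cesaroAvg_le_supCesaroAvg x m 0),
    ciSup_le fun n => (abs_le.1 (abs_cesaroAvg_le_norm x m n)).2⟩

theorem upperCesaro_le_supCesaroAvg {m : ℕ} (hm : 0 < m) : upperCesaro x ≤ supCesaroAvg x m := by
  obtain ⟨k, rfl⟩ := Nat.exists_eq_succ_of_ne_zero hm.ne'
  refine ciInf_le ⟨-‖x‖, ?_⟩ k
  rintro _ ⟨l, rfl⟩
  exact (abs_le.1 (abs_supCesaroAvg_le_norm x (l + 1))).1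

theorem upperCesaro_le_of_forall_le {m : ℕ} (hm : 0 < m) {c : ℝ}
    (h : ∀ n, cesaroAvg x m n ≤ c) : upperCesaro x ≤ c :=
  (upperCesaro_le_supCesaroAvg x hm).trans (ciSup_le h)

theorem upperCesaro_le_of_eventually {c : ℝ}
    (h : ∀ᶠ m in atTop, ∀ n, cesaroAvg x m n ≤ c) : upperCesaro x ≤ c :=
  let ⟨_, hm, hm0⟩ := (h.and (eventually_gt_atTop 0)).exists
  upperCesaro_le_of_forall_le x hm0 hm

theorem upperCesaro_le_of_forall_apply_le {c : ℝ} (h : ∀ n, x n ≤ c) : upperCesaro x ≤ c :=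
  upperCesaro_le_of_forall_le x one_pos fun n => (cesaroAvg_one x n).trans_le (h n)

theorem upperCesaro_le_norm : upperCesaro x ≤ ‖x‖ :=
  upperCesaro_le_of_forall_apply_le x fun n => (abs_le.1 (abs_apply_le_norm x n)).2

theorem exists_supCesaroAvg_lt {c : ℝ} (h : upperCesaro x < c) :
    ∃ m, 0 < m ∧ supCesaroAvg x m < c :=
  let ⟨m, hm⟩ := exists_lt_of_ciInf_lt h
  ⟨m + 1, m.succ_pos, hm⟩

theorem sum_range_le_mul_supCesaroAvg (b n : ℕ) :
    ∑ j ∈ range b, x (n + j) ≤ b * supCesaroAvg x b := by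
  rcases b.eq_zero_or_pos with rfl | hb
  · simp
  rw [← div_le_iff₀' (by positivity)]
  exact cesaroAvg_le_supCesaroAvg x b n

theorem sum_range_mul_le (b q n : ℕ) :
    ∑ j ∈ range (b * q), x (n + j) ≤ b * q * supCesaroAvg x b := by
  induction q with
  | zero => simp
  | succ q ih =>
    rw [Nat.mul_succ, sum_range_add]
    have hblock := sum_range_le_mul_supCesaroAvg x b (n + b * q)
    simp only [← add_assoc] at hblock ⊢
    push_cast
    linarith

theorem cesaroAvg_le_supCesaroAvg_add {b m : ℕ} (hb : 0 < b) (hm : 0 < m) (n : ℕ) :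
    cesaroAvg x m n ≤ supCesaroAvg x b + 2 * b * ‖x‖ / m := by
  set c := supCesaroAvg x b
  obtain ⟨hc₁, hc₂⟩ := abs_le.1 (abs_supCesaroAvg_le_norm x b)
  have hsplit := Nat.div_add_mod m b
  set q := m / b
  set r := m % b
  have hr : (r : ℝ) ≤ b := by exact_mod_cast (Nat.mod_lt m hb).le
  have hrem : ∑ j ∈ range r, x (n + (b * q + j)) ≤ r * ‖x‖ := by
    calc _ ≤ ∑ _j ∈ range r, ‖x‖ := sum_le_sum fun j _ => (abs_le.1 (abs_apply_le_norm x _)).2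
      _ = r * ‖x‖ := by rw [sum_const, card_range, nsmul_eq_mul]
  have hsum : ∑ j ∈ range m, x (n + j) ≤ m * c + b * (2 * ‖x‖) := by
    calc ∑ j ∈ range m, x (n + j)
        = ∑ j ∈ range (b * q), x (n + j) + ∑ j ∈ range r, x (n + (b * q + j)) := by
          rw [← sum_range_add, hsplit]
      _ ≤ b * q * c + r * ‖x‖ := add_le_add (sum_range_mul_le x b q n) hrem
      _ = m * c + r * (‖x‖ - c) := by rw [← hsplit]; push_cast; ring
      _ ≤ m * c + b * (2 * ‖x‖) := by gcongr; linarith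
  rw [cesaroAvg, div_le_iff₀ (by positivity), add_mul, div_mul_cancel₀ _ (by positivity)]
  linarith

theorem eventually_cesaroAvg_lt {ε : ℝ} (hε : 0 < ε) :
    ∀ᶠ m in atTop, ∀ n, cesaroAvg x m n < upperCesaro x + ε := by
  obtain ⟨b, hb, hbx⟩ := exists_supCesaroAvg_lt x (lt_add_of_pos_right _ (half_pos hε))
  have hsmall : ∀ᶠ m : ℕ in atTop, 2 * b * ‖x‖ / m < ε / 2 :=
    (tendsto_const_div_atTop_nhds_zero_nat _).eventually (gt_mem_nhds (half_pos hε))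
  filter_upwards [hsmall, eventually_gt_atTop 0] with m hm hm0 n
  linarith [cesaroAvg_le_supCesaroAvg_add x hb hm0 n]

theorem upperCesaro_add_le : upperCesaro (x + y) ≤ upperCesaro x + upperCesaro y := by
  refine le_of_forall_pos_le_add fun ε hε => upperCesaro_le_of_eventually _ ?_
  filter_upwards [eventually_cesaroAvg_lt x (half_pos hε), eventually_cesaroAvg_lt y (half_pos hε)]
    with m hx hy n
  rw [lp.coeFn_add, cesaroAvg_add]
  linarith [hx n, hy n]

theorem upperCesaro_smul {c : ℝ} (hc : 0 < c) : upperCesaro (c • x) = c * upperCesaro x := by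
  simp only [upperCesaro, supCesaroAvg, Real.mul_iInf_of_nonneg hc.le,
    Real.mul_iSup_of_nonneg hc.le, lp.coeFn_smul, cesaroAvg_smul]

theorem cesaroAvg_shiftSeq_sub (m n : ℕ) :
    cesaroAvg ⇑(shiftSeq x - x) m n = (x (n + m) - x n) / m := by
  simp only [cesaroAvg, lp.coeFn_sub, Pi.sub_apply, shiftSeq_apply, sum_sub_distrib]
  congr 1
  simpa [← add_assoc] using sum_range_sub (fun j => x (n + j)) m

theorem upperCesaro_shiftSeq_sub_nonpos : upperCesaro (shiftSeq x - x) ≤ 0 := by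
  refine le_of_forall_pos_le_add fun ε hε => upperCesaro_le_of_eventually _ ?_
  filter_upwards [(tendsto_const_div_atTop_nhds_zero_nat (2 * ‖x‖)).eventually (gt_mem_nhds hε)]
    with m hm n
  rw [cesaroAvg_shiftSeq_sub, zero_add]
  have h₁ := abs_le.1 (abs_apply_le_norm x (n + m))
  have h₂ := abs_le.1 (abs_apply_le_norm x n)
  exact (div_le_div_of_nonneg_right (by linarith) m.cast_nonneg).trans hm.le

end UpperCesaro

namespace IsBanachLimit

variable {L : StrongDual ℝ Linf}

theorem apply_le_of_forall_le (hL : IsBanachLimit L) {x : Linf} {c : ℝ} (h : ∀ n, x n ≤ c) :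
    L x ≤ c := by
  have := hL.1 (c • onesSeq - x) fun n => sub_nonneg.2 (by simpa [onesSeq] using h n)
  rwa [map_sub, map_smul, hL.2.2, smul_eq_mul, mul_one, sub_nonneg] at this

theorem apply_iterate_shiftSeq (hL : IsBanachLimit L) (k : ℕ) (x : Linf) :
    L (shiftSeq^[k] x) = L x := by
  induction k generalizing x with
  | zero => rfl
  | succ k ih => rw [Function.iterate_succ_apply, ih, hL.2.1]

theorem apply_le_supCesaroAvg (hL : IsBanachLimit L) (x : Linf) {m : ℕ} (hm : 0 < m) :
    L x ≤ supCesaroAvg x m := by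
  have hsum : L (∑ k ∈ range m, shiftSeq^[k] x) = m * L x := by
    simp [map_sum, hL.apply_iterate_shiftSeq]
  have hle := hL.apply_le_of_forall_le (x := ∑ k ∈ range m, shiftSeq^[k] x)
    (c := m * supCesaroAvg x m) fun n => by
      rw [lp.coeFn_sum, Finset.sum_apply]
      simpa only [iterate_shiftSeq_apply] using sum_range_le_mul_supCesaroAvg x m n
  rw [hsum] at hle
  exact le_of_mul_le_mul_left hle (by positivity)

theorem apply_le_upperCesaro (hL : IsBanachLimit L) (x : Linf) : L x ≤ upperCesaro x :=
  le_ciInf fun m => hL.apply_le_supCesaroAvg x m.succ_pos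

end IsBanachLimit

theorem isBanachLimit_of_le_upperCesaro {L : StrongDual ℝ Linf}
    (hL : ∀ x, L x ≤ upperCesaro x) : IsBanachLimit L := by
  refine ⟨fun x hx => ?_, fun x => ?_, ?_⟩
  · have := (hL (-x)).trans
      (upperCesaro_le_of_forall_apply_le (c := 0) _ fun n => by simpa using hx n)
    rwa [map_neg, neg_nonpos] at this
  · have h₁ := (hL _).trans (upperCesaro_shiftSeq_sub_nonpos x)
    have h₂ := (hL _).trans (upperCesaro_shiftSeq_sub_nonpos (-x))
    rw [map_sub] at h₁
    rw [shiftSeq_neg, map_sub, map_neg, map_neg] at h₂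
    linarith
  · have h₁ := (hL _).trans (upperCesaro_le_of_forall_apply_le (c := 1) onesSeq fun _ => le_rfl)
    have h₂ := (hL _).trans (upperCesaro_le_of_forall_apply_le (c := -1) (-onesSeq) fun _ => le_rfl)
    rw [map_neg] at h₂
    linarith

theorem exists_isBanachLimit_apply_eq_upperCesaro (x : Linf) :
    ∃ L : StrongDual ℝ Linf, IsBanachLimit L ∧ L x = upperCesaro x := by
  obtain ⟨g, hg, hgx⟩ := exists_linearMap_le_sublinear_eq upperCesaro
    (fun _ hc y => upperCesaro_smul y hc) upperCesaro_add_le x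
  have hbound : ∀ y, ‖g y‖ ≤ 1 * ‖y‖ := fun y => by
    have := (hg (-y)).trans (upperCesaro_le_norm (-y))
    rw [map_neg, norm_neg] at this
    rw [one_mul, Real.norm_eq_abs, abs_le]
    exact ⟨by linarith, (hg y).trans (upperCesaro_le_norm y)⟩
  exact ⟨g.mkContinuous 1 hbound, isBanachLimit_of_le_upperCesaro hg, hgx⟩

theorem forall_isBanachLimit_apply_eq_iff (x : Linf) (s : ℝ) :
    (∀ L : StrongDual ℝ Linf, IsBanachLimit L → L x = s) ↔
      upperCesaro x ≤ s ∧ upperCesaro (-x) ≤ -s := by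
  constructor
  · intro h
    obtain ⟨L, hL, hLx⟩ := exists_isBanachLimit_apply_eq_upperCesaro x
    obtain ⟨L', hL', hL'x⟩ := exists_isBanachLimit_apply_eq_upperCesaro (-x)
    rw [← hLx, ← hL'x, map_neg, h L hL, h L' hL']
    exact ⟨le_rfl, le_rfl⟩
  · rintro ⟨hx, hnx⟩ L hL
    have h₁ := hL.apply_le_upperCesaro x
    have h₂ := hL.apply_le_upperCesaro (-x)
    rw [map_neg] at h₂
    linarith

theorem uniform_cesaro_iff (x : Linf) (s : ℝ) :
    (∀ ε > (0 : ℝ), ∃ M : ℕ, ∀ m ≥ M, ∀ n, |cesaroAvg x m n - s| < ε) ↔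
      upperCesaro x ≤ s ∧ upperCesaro (-x) ≤ -s := by
  simp only [← eventually_atTop]
  constructor
  · intro h
    constructor <;> refine le_of_forall_pos_le_add fun ε hε => upperCesaro_le_of_eventually _ ?_ <;>
      filter_upwards [h ε hε] with m hm n
    · linarith [(abs_lt.1 (hm n)).2]
    · rw [lp.coeFn_neg, cesaroAvg_neg]
      linarith [(abs_lt.1 (hm n)).1]
  · rintro ⟨hx, hnx⟩ ε hε
    filter_upwards [eventually_cesaroAvg_lt x hε, eventually_cesaroAvg_lt (-x) hε] with m h₁ h₂ n
    have h₃ := h₂ n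
    rw [lp.coeFn_neg, cesaroAvg_neg] at h₃
    exact abs_lt.2 ⟨by linarith, by linarith [h₁ n]⟩

theorem almost_convergent_iff_uniform_cesaro (x : Linf) (s : ℝ) :
    (∀ L : StrongDual ℝ Linf, IsBanachLimit L → L x = s) ↔
    ∀ ε > (0:ℝ), ∃ M : ℕ, ∀ m ≥ M, ∀ n : ℕ,
      |(∑ j ∈ Finset.range m, x (n + j)) / m - s| < ε :=
  (forall_isBanachLimit_apply_eq_iff x s).trans (uniform_cesaro_iff x s).symm
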